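/- Let φ : ℝ → ℝ be even, C⁴ on ℝ∖{0}, and satisfy assumptions (A1)–(A2) with α ∈ (0,2), and let A(ζ) := ∫_{ℝ∖{0}} (1 − cos(ζx)) φ(x) dx be the symbol of the associated Lévy operator. Then there exist constants C > 0 and C′ > 0, depending only on α, a₀, c₁, c₂, such that for all ζ ∈ ℝ: A(ζ) ≥ C′^{−1}|ζ|^α − C′/2 and A(ζ) ≤ C|ζ|^α + C. -/

import Mathlib

open Real MeasureTheory Filter Set Topology

noncomputable section

/-- Principal-value Lévy operator: (𝓛 f)(x) = p.v. ∫ φ(x-y)(f(x)-f(y)) dy. -/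
def levy (φ f : ℝ → ℝ) (x : ℝ) : ℝ :=
  limUnder (nhdsWithin (0:ℝ) (Set.Ioi 0))
    (fun ε => ∫ y in {y : ℝ | ε ≤ |x - y|}, φ (x - y) * (f x - f y))

/-- Principal-value alignment force. -/
def alignForce (φ ρ u : ℝ → ℝ) (x : ℝ) : ℝ :=
  limUnder (nhdsWithin (0:ℝ) (Set.Ioi 0))
    (fun ε => ∫ y in {y : ℝ | ε ≤ |x - y|}, φ (x - y) * (u y - u x) * ρ y)

/-- Periodization -/
def phiS (φ : ℝ → ℝ) (x : ℝ) : ℝ := ∑' k : ℤ, φ (x + (k : ℝ))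

def supNorm (f : ℝ → ℝ) : ℝ := ⨆ x : ℝ, |f x|

structure A12 (φ : ℝ → ℝ) (α a₀ c₁ c₂ : ℝ) : Prop where
  αpos : 0 < α
  αlt : α < 2
  a₀pos : 0 < a₀
  a₀le : a₀ ≤ 1/2
  c₁ge : 1 ≤ c₁
  c₂pos : 0 < c₂
  even : ∀ x : ℝ, φ (-x) = φ x
  smooth : ContDiffOn ℝ 4 φ {(0:ℝ)}ᶜ
  lower : ∀ x : ℝ, x ≠ 0 → |x| ≤ a₀ → c₁⁻¹ * |x| ^ (-(1+α)) ≤ φ x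
  upper : ∀ x : ℝ, x ≠ 0 → |x| ≤ a₀ → φ x ≤ c₁ * |x| ^ (-(1+α))
  derivBound : ∀ j : ℕ, 1 ≤ j → j ≤ 4 → ∀ x : ℝ, x ≠ 0 → |x| ≤ a₀ →
    |iteratedDeriv j φ x| ≤ c₁ * |x| ^ (-(1+(j:ℝ)+α))
  mono : ∀ r s : ℝ, 0 < r → r ≤ s → s ≤ a₀ → φ s ≤ φ r
  tailInt : ∀ j : ℕ, j ≤ 4 →
    IntegrableOn (fun x : ℝ => |x| ^ (j:ℝ) * |iteratedDeriv j φ x|) {x : ℝ | a₀ ≤ |x|}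
  tailBound : ∀ j : ℕ, j ≤ 4 →
    (∫ x in {x : ℝ | a₀ ≤ |x|}, |x| ^ (j:ℝ) * |iteratedDeriv j φ x|) ≤ c₂

structure EASol (φ : ℝ → ℝ) (T : ℝ) (ρ u : ℝ → ℝ → ℝ) : Prop where
  smooth_rho : ContDiffOn ℝ (⊤ : ℕ∞) (Function.uncurry ρ) (Set.univ ×ˢ Set.Icc 0 T)
  smooth_u : ContDiffOn ℝ (⊤ : ℕ∞) (Function.uncurry u) (Set.univ ×ˢ Set.Icc 0 T)
  periodic_rho : ∀ x t, ρ (x + 1) t = ρ x t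
  periodic_u : ∀ x t, u (x + 1) t = u x t
  mass : ∀ x : ℝ, ∀ t ∈ Set.Icc 0 T,
    derivWithin (fun s => ρ x s) (Set.Icc 0 T) t + deriv (fun y => ρ y t * u y t) x = 0
  mom : ∀ x : ℝ, ∀ t ∈ Set.Icc 0 T,
    derivWithin (fun s => u x s) (Set.Icc 0 T) t + u x t * deriv (fun y => u y t) x
      = alignForce φ (fun y => ρ y t) (fun y => u y t) x

/-- The Lévy–Khintchine symbol of the Lévy operator with kernel `φ`. -/
def symbolA (φ : ℝ → ℝ) (ζ : ℝ) : ℝ := ∫ x : ℝ, (1 - Real.cos (ζ * x)) * φ x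

variable {φ : ℝ → ℝ} {α a₀ c₁ c₂ : ℝ}

private lemma stmt6_nonneg (h : A12 φ α a₀ c₁ c₂) (ζ : ℝ) {x : ℝ} (hx : x ∈ Set.Ioc 0 a₀) :
    0 ≤ (1 - Real.cos (ζ * x)) * φ x := by
  have hx0 : (0:ℝ) < x := hx.1
  have hxa : |x| ≤ a₀ := by rw [abs_of_pos hx0]; exact hx.2
  have hc₁ : (0:ℝ) < c₁ := lt_of_lt_of_le one_pos h.c₁ge
  have hφ : 0 ≤ φ x := le_trans (by positivity) (h.lower x (ne_of_gt hx0) hxa)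
  have : Real.cos (ζ * x) ≤ 1 := Real.cos_le_one _
  nlinarith

private lemma stmt6_ptbound (h : A12 φ α a₀ c₁ c₂) (ζ : ℝ) {x : ℝ} (hx : x ∈ Set.Ioc 0 a₀) :
    (1 - Real.cos (ζ * x)) * φ x ≤ c₁ * ζ ^ 2 / 2 * x ^ (1 - α) := by
  have hx0 : (0:ℝ) < x := hx.1
  have hxa : |x| ≤ a₀ := by rw [abs_of_pos hx0]; exact hx.2
  have hc₁ : (0:ℝ) < c₁ := lt_of_lt_of_le one_pos h.c₁ge
  have hφ : 0 ≤ φ x := le_trans (by positivity) (h.lower x (ne_of_gt hx0) hxa)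
  have hcos : 1 - Real.cos (ζ * x) ≤ (ζ * x) ^ 2 / 2 := by
    have := Real.one_sub_sq_div_two_le_cos (x := ζ * x); linarith
  have hcos0 : 0 ≤ 1 - Real.cos (ζ * x) := by
    have := Real.cos_le_one (ζ * x); linarith
  have hup : φ x ≤ c₁ * x ^ (-(1+α)) := by
    have := h.upper x (ne_of_gt hx0) hxa; rwa [abs_of_pos hx0] at this
  have key : (1 - Real.cos (ζ * x)) * φ x ≤ ((ζ * x) ^ 2 / 2) * (c₁ * x ^ (-(1+α))) := by
    apply mul_le_mul hcos hup hφ (by positivity)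
  refine key.trans (le_of_eq ?_)
  have hxx : (x:ℝ) ^ (2:ℕ) * x ^ (-(1+α)) = x ^ (1-α) := by
    rw [← Real.rpow_natCast x 2, ← Real.rpow_add hx0]
    congr 1; push_cast; ring
  calc ((ζ * x) ^ 2 / 2) * (c₁ * x ^ (-(1+α)))
      = c₁ * ζ ^ 2 / 2 * (x ^ (2:ℕ) * x ^ (-(1+α))) := by ring
    _ = c₁ * ζ ^ 2 / 2 * x ^ (1-α) := by rw [hxx]

private lemma stmt6_intIoc (h : A12 φ α a₀ c₁ c₂) (ζ : ℝ) {m : ℝ} (hm : m ≤ a₀) :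
    IntegrableOn (fun x => (1 - Real.cos (ζ * x)) * φ x) (Set.Ioc 0 m) := by
  have hrp : IntegrableOn (fun x : ℝ => c₁ * ζ ^ 2 / 2 * x ^ (1 - α)) (Set.Ioc 0 m) := by
    have : IntervalIntegrable (fun x : ℝ => x ^ (1 - α)) volume 0 m :=
      intervalIntegral.intervalIntegrable_rpow' (by linarith [h.αlt])
    exact this.1.const_mul _
  have hsub : Set.Ioc (0:ℝ) m ⊆ {(0:ℝ)}ᶜ := fun x hx => by
    simp only [Set.mem_compl_iff, Set.mem_singleton_iff]; exact ne_of_gt hx.1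
  have hcont : ContinuousOn (fun x => (1 - Real.cos (ζ * x)) * φ x) (Set.Ioc 0 m) := by
    apply ContinuousOn.mul
    · exact (continuous_const.sub (Real.continuous_cos.comp (continuous_const.mul continuous_id))).continuousOn
    · exact (h.smooth.continuousOn).mono hsub
  have hc₁ : (0:ℝ) < c₁ := lt_of_lt_of_le one_pos h.c₁ge
  refine Integrable.mono hrp (hcont.aestronglyMeasurable measurableSet_Ioc) ?_
  filter_upwards [ae_restrict_mem measurableSet_Ioc] with x hx
  have hx' : x ∈ Set.Ioc (0:ℝ) a₀ := ⟨hx.1, hx.2.trans hm⟩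
  rw [Real.norm_eq_abs, Real.norm_eq_abs,
    abs_of_nonneg (stmt6_nonneg h ζ hx'),
    abs_of_nonneg (mul_nonneg (by positivity) (Real.rpow_nonneg hx.1.le _))]
  exact stmt6_ptbound h ζ hx'

private lemma stmt6_even (h : A12 φ α a₀ c₁ c₂) (ζ x : ℝ) :
    (1 - Real.cos (ζ * (-x))) * φ (-x) = (1 - Real.cos (ζ * x)) * φ x := by
  rw [h.even, mul_neg, Real.cos_neg]

private lemma stmt6_tailabs (h : A12 φ α a₀ c₁ c₂) :
    IntegrableOn (fun x => |φ x|) {x : ℝ | a₀ ≤ |x|} := by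
  have := h.tailInt 0 (by norm_num)
  simpa [iteratedDeriv_zero, Real.rpow_zero] using this

private lemma stmt6_Tmeas : MeasurableSet {x : ℝ | a₀ ≤ |x|} :=
  (isClosed_le continuous_const continuous_abs).measurableSet

private lemma stmt6_tail_int (h : A12 φ α a₀ c₁ c₂) (ζ : ℝ) :
    IntegrableOn (fun x => (1 - Real.cos (ζ * x)) * φ x) {x : ℝ | a₀ ≤ |x|} := by
  have hsub : {x : ℝ | a₀ ≤ |x|} ⊆ {(0:ℝ)}ᶜ := fun x hx => by
    simp only [Set.mem_compl_iff, Set.mem_singleton_iff]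
    intro h0; rw [h0] at hx; simp only [Set.mem_setOf_eq, abs_zero] at hx
    linarith [h.a₀pos]
  have hcont : ContinuousOn (fun x => (1 - Real.cos (ζ * x)) * φ x) {x : ℝ | a₀ ≤ |x|} := by
    apply ContinuousOn.mul
    · exact (continuous_const.sub (Real.continuous_cos.comp
        (continuous_const.mul continuous_id))).continuousOn
    · exact (h.smooth.continuousOn).mono hsub
  refine Integrable.mono ((stmt6_tailabs h).const_mul 2)
    (hcont.aestronglyMeasurable stmt6_Tmeas) ?_
  filter_upwards [ae_restrict_mem stmt6_Tmeas] with x _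
  have h1 : |1 - Real.cos (ζ * x)| ≤ 2 := by
    have := Real.cos_le_one (ζ * x); have := Real.neg_one_le_cos (ζ * x)
    rw [abs_le]; constructor <;> linarith
  calc ‖(1 - Real.cos (ζ * x)) * φ x‖ = |1 - Real.cos (ζ * x)| * |φ x| := abs_mul _ _
    _ ≤ 2 * |φ x| := by
        apply mul_le_mul_of_nonneg_right h1 (abs_nonneg _)
    _ ≤ ‖2 * |φ x|‖ := le_abs_self _

private lemma stmt6_tail_bound (h : A12 φ α a₀ c₁ c₂) (ζ : ℝ) :
    |∫ x in {x : ℝ | a₀ ≤ |x|}, (1 - Real.cos (ζ * x)) * φ x| ≤ 2 * c₂ := by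
  have hb : (∫ x in {x : ℝ | a₀ ≤ |x|}, |φ x|) ≤ c₂ := by
    have := h.tailBound 0 (by norm_num)
    simpa [iteratedDeriv_zero, Real.rpow_zero] using this
  calc |∫ x in {x : ℝ | a₀ ≤ |x|}, (1 - Real.cos (ζ * x)) * φ x|
      ≤ ∫ x in {x : ℝ | a₀ ≤ |x|}, ‖(1 - Real.cos (ζ * x)) * φ x‖ :=
        by rw [← Real.norm_eq_abs]; exact norm_integral_le_integral_norm _
    _ ≤ ∫ x in {x : ℝ | a₀ ≤ |x|}, 2 * |φ x| := by
        refine setIntegral_mono_on (stmt6_tail_int h ζ).norm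
          ((stmt6_tailabs h).const_mul 2) stmt6_Tmeas ?_
        intro x _
        have h1 : |1 - Real.cos (ζ * x)| ≤ 2 := by
          have := Real.cos_le_one (ζ * x); have := Real.neg_one_le_cos (ζ * x)
          rw [abs_le]; constructor <;> linarith
        calc ‖(1 - Real.cos (ζ * x)) * φ x‖ = |1 - Real.cos (ζ * x)| * |φ x| := abs_mul _ _
          _ ≤ 2 * |φ x| := mul_le_mul_of_nonneg_right h1 (abs_nonneg _)
    _ = 2 * ∫ x in {x : ℝ | a₀ ≤ |x|}, |φ x| := integral_const_mul 2 _
    _ ≤ 2 * c₂ := by linarith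

private lemma stmt6_split (h : A12 φ α a₀ c₁ c₂) (ζ : ℝ) :
    symbolA φ ζ = 2 * (∫ x in Set.Ioc 0 a₀, (1 - Real.cos (ζ * x)) * φ x)
      + ∫ x in {x : ℝ | a₀ ≤ |x|}, (1 - Real.cos (ζ * x)) * φ x := by
  set F := fun x : ℝ => (1 - Real.cos (ζ * x)) * φ x with hF
  have ha₀ := h.a₀pos
  have hInt0a : IntegrableOn F (Set.Ioc 0 a₀) := stmt6_intIoc h ζ le_rfl
  have hI : IntervalIntegrable F volume 0 a₀ :=
    (intervalIntegrable_iff_integrableOn_Ioc_of_le ha₀.le).2 hInt0a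
  have hI2 : IntervalIntegrable (fun x => F (-x)) volume (-0) (-a₀) :=
    (IntervalIntegrable.iff_comp_neg (f := F)).mp hI
  have heq : (fun x => F (-x)) = F := by
    funext x; exact stmt6_even h ζ x
  rw [heq] at hI2
  have hInta0 : IntegrableOn F (Set.Ioc (-a₀) 0) := by simpa using hI2.2
  have hTc : {x : ℝ | a₀ ≤ |x|}ᶜ = Set.Ioo (-a₀) a₀ := by
    ext x; simp [not_le, abs_lt]
  have hIntE : IntegrableOn F (Set.Ioo (-a₀) a₀) := by
    apply (hInta0.union hInt0a).mono_set
    rw [Set.Ioc_union_Ioc_eq_Ioc (by linarith) ha₀.le]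
    exact Set.Ioo_subset_Ioc_self
  have hIntF : Integrable F := by
    have huniv : {x : ℝ | a₀ ≤ |x|} ∪ Set.Ioo (-a₀) a₀ = Set.univ := by
      rw [← hTc]; exact Set.union_compl_self _
    exact integrableOn_univ.mp (huniv ▸ (stmt6_tail_int h ζ).union hIntE)
  have h1 : (∫ x in {x : ℝ | a₀ ≤ |x|}, F x) + ∫ x in {x : ℝ | a₀ ≤ |x|}ᶜ, F x = ∫ x, F x :=
    integral_add_compl stmt6_Tmeas hIntF
  rw [hTc] at h1
  have h2 : ∫ x in Set.Ioo (-a₀) a₀, F x = ∫ x in Set.Ioc (-a₀) a₀, F x :=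
    (integral_Ioc_eq_integral_Ioo).symm
  have h3 : ∫ x in Set.Ioc (-a₀) a₀, F x
      = (∫ x in Set.Ioc (-a₀) 0, F x) + ∫ x in Set.Ioc 0 a₀, F x := by
    rw [← setIntegral_union (Set.Ioc_disjoint_Ioc_of_le le_rfl) measurableSet_Ioc hInta0 hInt0a,
      Set.Ioc_union_Ioc_eq_Ioc (by linarith) ha₀.le]
  have h4 : ∫ x in Set.Ioc (-a₀) 0, F x = ∫ x in Set.Ioc 0 a₀, F x := by
    calc ∫ x in Set.Ioc (-a₀) 0, F x = ∫ x in (-a₀)..(0:ℝ), F x :=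
          (intervalIntegral.integral_of_le (by linarith)).symm
      _ = ∫ x in (-a₀)..(-0:ℝ), F x := by norm_num
      _ = ∫ x in (0:ℝ)..a₀, F (-x) := (intervalIntegral.integral_comp_neg F).symm
      _ = ∫ x in (0:ℝ)..a₀, F x := by simp only [heq]
      _ = ∫ x in Set.Ioc 0 a₀, F x := intervalIntegral.integral_of_le ha₀.le
  have h5 : symbolA φ ζ = ∫ x, F x := rfl
  rw [h5, ← h1, h2, h3, h4]; ring

private lemma stmt6_lower_big (h : A12 φ α a₀ c₁ c₂) {ζ : ℝ} (hζ : 0 < ζ) (hζa : 1 ≤ ζ * a₀) :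
    (1 - Real.cos (1/2)) / (2 * c₁) * ζ ^ α
      ≤ ∫ x in Set.Ioc 0 a₀, (1 - Real.cos (ζ * x)) * φ x := by
  have hc₁ : (0:ℝ) < c₁ := lt_of_lt_of_le one_pos h.c₁ge
  have ha₀ := h.a₀pos
  have hα0 := h.αpos
  set κ := 1 - Real.cos (1/2) with hκdef
  have hκ : 0 < κ := by
    have hcc := Real.strictAntiOn_cos ⟨le_refl (0:ℝ), Real.pi_pos.le⟩
      (⟨by norm_num, by linarith [Real.pi_gt_three]⟩ : (1/2:ℝ) ∈ Icc 0 π) (by norm_num)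
    simp only [Real.cos_zero] at hcc
    simp only [hκdef]; linarith
  have hSsub : Set.Ioc (1/(2*ζ)) (1/ζ) ⊆ Set.Ioc 0 a₀ := by
    intro x hx
    refine ⟨lt_trans (by positivity) hx.1, hx.2.trans ?_⟩
    rw [div_le_iff₀ hζ]; nlinarith
  have hInt : IntegrableOn (fun x => (1 - Real.cos (ζ * x)) * φ x) (Set.Ioc 0 a₀) :=
    stmt6_intIoc h ζ le_rfl
  have hptwise : ∀ x ∈ Set.Ioc (1/(2*ζ)) (1/ζ),
      κ * (c₁⁻¹ * ζ ^ (1+α)) ≤ (1 - Real.cos (ζ * x)) * φ x := by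
    intro x hx
    have hx0 : (0:ℝ) < x := lt_trans (by positivity) hx.1
    have hx2 : x ≤ 1/ζ := hx.2
    have hxa : x ≤ a₀ := (hSsub hx).2
    have h12 : 1/2 ≤ ζ * x := by
      have := (div_lt_iff₀ (by positivity : (0:ℝ) < 2*ζ)).1 hx.1
      nlinarith
    have hζx1 : ζ * x ≤ 1 := by
      have := (le_div_iff₀ hζ).1 hx2; linarith
    have hcos : Real.cos (ζ * x) ≤ Real.cos (1/2) :=
      Real.cos_le_cos_of_nonneg_of_le_pi (by norm_num)
        (hζx1.trans (by linarith [Real.pi_gt_three])) h12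
    have hκle : κ ≤ 1 - Real.cos (ζ * x) := by simp only [hκdef]; linarith
    have hφ : c₁⁻¹ * ζ ^ (1+α) ≤ φ x := by
      have hl := h.lower x (ne_of_gt hx0) (by rw [abs_of_pos hx0]; exact hxa)
      rw [abs_of_pos hx0] at hl
      refine le_trans ?_ hl
      apply mul_le_mul_of_nonneg_left _ (by positivity)
      have h1 : (1/ζ) ^ (-(1+α)) ≤ x ^ (-(1+α)) :=
        Real.rpow_le_rpow_of_nonpos hx0 hx2 (by linarith)
      have h2 : (1/ζ) ^ (-(1+α)) = ζ ^ (1+α) := by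
        rw [one_div, Real.inv_rpow hζ.le, Real.rpow_neg hζ.le, inv_inv]
      rwa [h2] at h1
    exact mul_le_mul hκle hφ (by positivity) (by linarith)
  have hstep1 : (∫ _x in Set.Ioc (1/(2*ζ)) (1/ζ), κ * (c₁⁻¹ * ζ ^ (1+α)))
      ≤ ∫ x in Set.Ioc (1/(2*ζ)) (1/ζ), (1 - Real.cos (ζ * x)) * φ x := by
    refine setIntegral_mono_on (integrableOn_const measure_Ioc_lt_top.ne)
      (hInt.mono_set hSsub) measurableSet_Ioc hptwise
  have hstep2 : ∫ x in Set.Ioc (1/(2*ζ)) (1/ζ), (1 - Real.cos (ζ * x)) * φ x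
      ≤ ∫ x in Set.Ioc 0 a₀, (1 - Real.cos (ζ * x)) * φ x := by
    refine setIntegral_mono_set hInt ?_ (HasSubset.Subset.eventuallyLE hSsub)
    rw [EventuallyLE, ae_restrict_iff' measurableSet_Ioc]
    exact ae_of_all _ fun x hx => stmt6_nonneg h ζ hx
  have hval : (∫ _x in Set.Ioc (1/(2*ζ)) (1/ζ), κ * (c₁⁻¹ * ζ ^ (1+α)))
      = κ / (2*c₁) * ζ ^ α := by
    rw [setIntegral_const, measureReal_def, Real.volume_Ioc, smul_eq_mul,
      ENNReal.toReal_ofReal (by rw [sub_nonneg]; apply div_le_div_of_nonneg_left <;> linarith)]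
    have hζα : ζ ^ (1+α) = ζ * ζ ^ α := by
      rw [Real.rpow_add hζ, Real.rpow_one]
    rw [hζα]; field_simp; ring
  linarith [hstep1.trans hstep2, hval]

private lemma stmt6_upper_pos (h : A12 φ α a₀ c₁ c₂) {ζ : ℝ} (hζ : 0 < ζ) :
    (∫ x in Set.Ioc 0 a₀, (1 - Real.cos (ζ * x)) * φ x)
      ≤ c₁ / (2*(2-α)) * ζ ^ α + 2*c₁/α * (ζ ^ α + (a₀⁻¹) ^ α) := by
  have hc₁ : (0:ℝ) < c₁ := lt_of_lt_of_le one_pos h.c₁ge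
  have ha₀ := h.a₀pos
  have hα0 := h.αpos
  have h2α : (0:ℝ) < 2 - α := by linarith [h.αlt]
  set m := min ζ⁻¹ a₀ with hmdef
  have hm0 : 0 < m := lt_min (inv_pos.2 hζ) ha₀
  have hma : m ≤ a₀ := min_le_right _ _
  have hmζ : m ≤ ζ⁻¹ := min_le_left _ _
  have hζm : ζ * m ≤ 1 := by
    have := mul_le_mul_of_nonneg_left hmζ hζ.le
    rwa [mul_inv_cancel₀ (ne_of_gt hζ)] at this
  have hIntm : IntegrableOn (fun x => (1 - Real.cos (ζ * x)) * φ x) (Set.Ioc 0 m) :=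
    stmt6_intIoc h ζ hma
  have hIntma : IntegrableOn (fun x => (1 - Real.cos (ζ * x)) * φ x) (Set.Ioc m a₀) :=
    (stmt6_intIoc h ζ le_rfl).mono_set (Set.Ioc_subset_Ioc hm0.le le_rfl)
  have hsplit : (∫ x in Set.Ioc 0 a₀, (1 - Real.cos (ζ * x)) * φ x)
      = (∫ x in Set.Ioc 0 m, (1 - Real.cos (ζ * x)) * φ x)
        + ∫ x in Set.Ioc m a₀, (1 - Real.cos (ζ * x)) * φ x := by
    rw [← setIntegral_union (Set.Ioc_disjoint_Ioc_of_le le_rfl) measurableSet_Ioc hIntm hIntma,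
      Set.Ioc_union_Ioc_eq_Ioc hm0.le hma]
  -- first piece
  have hrp : IntegrableOn (fun x : ℝ => c₁ * ζ ^ 2 / 2 * x ^ (1 - α)) (Set.Ioc 0 m) :=
    (intervalIntegral.intervalIntegrable_rpow' (by linarith [h.αlt])).1.const_mul _
  have hI1 : (∫ x in Set.Ioc 0 m, (1 - Real.cos (ζ * x)) * φ x)
      ≤ c₁ / (2*(2-α)) * ζ ^ α := by
    have step : (∫ x in Set.Ioc 0 m, (1 - Real.cos (ζ * x)) * φ x)
        ≤ ∫ x in Set.Ioc 0 m, c₁ * ζ ^ 2 / 2 * x ^ (1 - α) :=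
      setIntegral_mono_on hIntm hrp measurableSet_Ioc
        (fun x hx => stmt6_ptbound h ζ ⟨hx.1, hx.2.trans hma⟩)
    have hval : (∫ x in Set.Ioc 0 m, c₁ * ζ ^ 2 / 2 * x ^ (1 - α))
        = c₁ * ζ ^ 2 / 2 * (m ^ (2 - α) / (2 - α)) := by
      rw [integral_const_mul, ← intervalIntegral.integral_of_le hm0.le,
        integral_rpow (Or.inl (by linarith [h.αlt] : (-1:ℝ) < 1 - α))]
      rw [show (1:ℝ) - α + 1 = 2 - α by ring,
        Real.zero_rpow (by linarith : (2:ℝ) - α ≠ 0), sub_zero]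
    have key : ζ ^ 2 * m ^ (2 - α) ≤ ζ ^ α := by
      have h1 : ζ ^ (2:ℕ) = ζ ^ α * ζ ^ (2-α) := by
        rw [← Real.rpow_natCast ζ 2, ← Real.rpow_add hζ]
        congr 1; push_cast; ring
      have h2 : ζ ^ (2-α) * m ^ (2-α) = (ζ*m) ^ (2-α) :=
        (Real.mul_rpow hζ.le hm0.le).symm
      calc ζ ^ 2 * m ^ (2-α) = ζ ^ α * (ζ ^ (2-α) * m ^ (2-α)) := by rw [h1]; ring
        _ = ζ ^ α * (ζ*m) ^ (2-α) := by rw [h2]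
        _ ≤ ζ ^ α * 1 := mul_le_mul_of_nonneg_left
            (Real.rpow_le_one (by positivity) hζm (by linarith)) (Real.rpow_nonneg hζ.le α)
        _ = ζ ^ α := mul_one _
    refine step.trans (le_of_eq hval |>.trans ?_)
    have : c₁ * ζ ^ 2 / 2 * (m ^ (2 - α) / (2 - α))
        = c₁ / (2*(2-α)) * (ζ ^ 2 * m ^ (2-α)) := by field_simp
    rw [this]
    exact mul_le_mul_of_nonneg_left key (by positivity)
  -- second piece
  have hIrp : IntegrableOn (fun x : ℝ => x ^ (-(1+α))) (Set.Ioi m) :=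
    integrableOn_Ioi_rpow_of_lt (by linarith) hm0
  have hI2 : (∫ x in Set.Ioc m a₀, (1 - Real.cos (ζ * x)) * φ x)
      ≤ 2*c₁/α * (ζ ^ α + (a₀⁻¹) ^ α) := by
    have hpt2 : ∀ x ∈ Set.Ioc m a₀,
        (1 - Real.cos (ζ * x)) * φ x ≤ 2*c₁ * x ^ (-(1+α)) := by
      intro x hx
      have hx0 : 0 < x := lt_of_le_of_lt hm0.le hx.1
      have hxa : |x| ≤ a₀ := by rw [abs_of_pos hx0]; exact hx.2
      have hφ : 0 ≤ φ x := le_trans (by positivity) (h.lower x (ne_of_gt hx0) hxa)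
      have hup := h.upper x (ne_of_gt hx0) hxa
      rw [abs_of_pos hx0] at hup
      have hcos : 1 - Real.cos (ζ * x) ≤ 2 := by
        have := Real.neg_one_le_cos (ζ * x); linarith
      have hcos0 : 0 ≤ 1 - Real.cos (ζ * x) := by
        have := Real.cos_le_one (ζ * x); linarith
      calc (1 - Real.cos (ζ * x)) * φ x ≤ 2 * (c₁ * x ^ (-(1+α))) :=
            mul_le_mul hcos hup hφ (by norm_num)
        _ = 2*c₁ * x ^ (-(1+α)) := by ring
    have hint2 : IntegrableOn (fun x : ℝ => 2*c₁ * x ^ (-(1+α))) (Set.Ioc m a₀) :=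
      (hIrp.mono_set Set.Ioc_subset_Ioi_self).const_mul _
    have step : (∫ x in Set.Ioc m a₀, (1 - Real.cos (ζ * x)) * φ x)
        ≤ ∫ x in Set.Ioc m a₀, 2*c₁ * x ^ (-(1+α)) :=
      setIntegral_mono_on hIntma hint2 measurableSet_Ioc hpt2
    have step2 : (∫ x in Set.Ioc m a₀, 2*c₁ * x ^ (-(1+α)))
        ≤ 2*c₁ * ∫ x in Set.Ioi m, x ^ (-(1+α)) := by
      rw [integral_const_mul]
      refine mul_le_mul_of_nonneg_left ?_ (by positivity)
      refine setIntegral_mono_set hIrp ?_ (HasSubset.Subset.eventuallyLE Set.Ioc_subset_Ioi_self)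
      rw [EventuallyLE, ae_restrict_iff' measurableSet_Ioi]
      exact ae_of_all _ fun x hx => Real.rpow_nonneg (le_of_lt (lt_trans hm0 hx)) _
    have hval2 : (∫ x in Set.Ioi m, x ^ (-(1+α))) = m ^ (-α) / α := by
      rw [integral_Ioi_rpow_of_lt (by linarith) hm0,
        show -(1+α) + 1 = -α by ring, neg_div_neg_eq]
    have hmb : m ^ (-α) ≤ ζ ^ α + (a₀⁻¹) ^ α := by
      have hK0 : (0:ℝ) ≤ (a₀⁻¹) ^ α := Real.rpow_nonneg (by positivity) _
      have hζα : (0:ℝ) ≤ ζ ^ α := Real.rpow_nonneg hζ.le _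
      rcases le_total ζ⁻¹ a₀ with hc|hc
      · rw [hmdef, min_eq_left hc, Real.inv_rpow hζ.le, ← Real.rpow_neg hζ.le, neg_neg]
        linarith
      · rw [hmdef, min_eq_right hc, Real.rpow_neg ha₀.le, ← Real.inv_rpow ha₀.le]
        linarith
    calc (∫ x in Set.Ioc m a₀, (1 - Real.cos (ζ * x)) * φ x)
        ≤ 2*c₁ * ∫ x in Set.Ioi m, x ^ (-(1+α)) := step.trans step2
      _ = 2*c₁ * (m ^ (-α) / α) := by rw [hval2]
      _ = 2*c₁/α * m ^ (-α) := by field_simp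
      _ ≤ 2*c₁/α * (ζ ^ α + (a₀⁻¹) ^ α) :=
          mul_le_mul_of_nonneg_left hmb (by positivity)
  rw [hsplit]; linarith

/-- Pointwise lower/upper bounds for the symbol:
`A(ζ) ≥ C'⁻¹ |ζ|^α − C'/2` and `A(ζ) ≤ C |ζ|^α + C`, with constants depending
only on `α, a₀, c₁, c₂`. -/
theorem stmt6 (φ : ℝ → ℝ) (α a₀ c₁ c₂ : ℝ) (h : A12 φ α a₀ c₁ c₂) :
    ∃ C > (0:ℝ), ∃ C' > (0:ℝ), ∀ ζ : ℝ,
      C'⁻¹ * |ζ| ^ α - C' / 2 ≤ symbolA φ ζ ∧ symbolA φ ζ ≤ C * |ζ| ^ α + C := by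
  have hα0 := h.αpos
  have hα2 := h.αlt
  have ha₀ := h.a₀pos
  have hc₁ : (0:ℝ) < c₁ := lt_of_lt_of_le one_pos h.c₁ge
  have hc₂ := h.c₂pos
  have h2α : (0:ℝ) < 2 - α := by linarith
  set κ := 1 - Real.cos (1/2) with hκdef
  have hκ : 0 < κ := by
    have hcc := Real.strictAntiOn_cos ⟨le_refl (0:ℝ), Real.pi_pos.le⟩
      (⟨by norm_num, by linarith [Real.pi_gt_three]⟩ : (1/2:ℝ) ∈ Icc 0 π) (by norm_num)
    simp only [Real.cos_zero] at hcc
    simp only [hκdef]; linarith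
  have hκ1 : κ ≤ 1 := by
    have : 0 ≤ Real.cos (1/2) := Real.cos_nonneg_of_mem_Icc
      ⟨by linarith [Real.pi_gt_three], by linarith [Real.pi_gt_three]⟩
    simp only [hκdef]; linarith
  set K := (a₀⁻¹) ^ α with hKdef
  have hK0 : 0 < K := Real.rpow_pos_of_pos (by positivity) _
  set C := c₁/(2-α) + 4*c₁/α + 4*c₁*K/α + 2*c₂ + 1 with hCdef
  have hC : 0 < C := by
    have t1 : 0 < c₁/(2-α) := by positivity
    have t2 : 0 < 4*c₁/α := by positivity
    have t3 : 0 < 4*c₁*K/α := by positivity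
    simp only [hCdef]; linarith
  set C' := max (c₁/κ) (2*(2*c₂ + K)) with hC'def
  have hC'1 : 1 ≤ C' := le_trans ((one_le_div hκ).2 (hκ1.trans h.c₁ge)) (le_max_left _ _)
  have hC'0 : 0 < C' := lt_of_lt_of_le one_pos hC'1
  refine ⟨C, hC, C', hC'0, fun ζ => ?_⟩
  have habs : symbolA φ ζ = symbolA φ |ζ| := by
    unfold symbolA; congr 1; funext x
    rcases abs_cases ζ with ⟨he, _⟩ | ⟨he, _⟩ <;> rw [he]
    simp [neg_mul, Real.cos_neg]
  rw [habs]
  set ξ := |ζ| with hξdef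
  have hξ0 : (0:ℝ) ≤ ξ := abs_nonneg ζ
  have hsplit := stmt6_split h ξ
  have htail := abs_le.1 (stmt6_tail_bound h ξ)
  have hI0 : 0 ≤ ∫ x in Set.Ioc 0 a₀, (1 - Real.cos (ξ * x)) * φ x :=
    setIntegral_nonneg measurableSet_Ioc (fun x hx => stmt6_nonneg h ξ hx)
  have hξα : 0 ≤ ξ ^ α := Real.rpow_nonneg hξ0 α
  constructor
  · -- lower bound
    by_cases hbig : 1 ≤ ξ * a₀
    · have hξpos : 0 < ξ := by nlinarith
      have hlow := stmt6_lower_big h hξpos hbig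
      have h1 : C'⁻¹ * ξ ^ α ≤ κ/c₁ * ξ ^ α := by
        refine mul_le_mul_of_nonneg_right ?_ hξα
        have hle : c₁/κ ≤ C' := le_max_left _ _
        calc C'⁻¹ ≤ (c₁/κ)⁻¹ := by
              apply inv_anti₀ (div_pos hc₁ hκ) hle
          _ = κ/c₁ := by rw [inv_div]
      have h2 : 2*c₂ ≤ C'/2 := by
        have := le_max_right (c₁/κ) (2*(2*c₂ + K)); linarith [hK0]
      have hdouble : κ/(2*c₁) * ξ ^ α * 2 = κ/c₁ * ξ ^ α := by
        field_simp
      rw [hsplit]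
      nlinarith [hlow, htail.1, h1, h2]
    · push_neg at hbig
      have hξK : ξ ^ α ≤ K := by
        have hlt : ξ ≤ a₀⁻¹ := by
          rw [← one_div]; exact le_of_lt ((lt_div_iff₀ ha₀).2 hbig)
        exact Real.rpow_le_rpow hξ0 hlt hα0.le
      have h3 : 2*(2*c₂ + K) ≤ C' := le_max_right _ _
      have hC'inv : C'⁻¹ ≤ 1 := inv_le_one_of_one_le₀ hC'1
      have h4 : C'⁻¹ * ξ ^ α ≤ K :=
        le_trans (mul_le_of_le_one_left hξα hC'inv) hξK
      rw [hsplit]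
      linarith [htail.1, hI0]
  · -- upper bound
    rcases eq_or_lt_of_le hξ0 with hξz | hξpos
    · have hz : symbolA φ ξ = 0 := by
        unfold symbolA
        rw [← hξz]
        simp
      rw [hz, ← hξz, Real.zero_rpow (ne_of_gt hα0)]
      linarith
    · have hup := stmt6_upper_pos h hξpos
      rw [← hKdef] at hup
      have hexp : 2*(c₁/(2*(2-α)) * ξ ^ α + 2*c₁/α * (ξ ^ α + K))
          = (c₁/(2-α) + 4*c₁/α) * ξ ^ α + 4*c₁*K/α := by
        field_simp; ring
      have hcoef : (c₁/(2-α) + 4*c₁/α) * ξ ^ α ≤ C * ξ ^ α := by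
        refine mul_le_mul_of_nonneg_right ?_ hξα
        have t3 : 0 ≤ 4*c₁*K/α := by positivity
        simp only [hCdef]; linarith
      have hconst : 4*c₁*K/α + 2*c₂ ≤ C := by
        have t1 : 0 ≤ c₁/(2-α) := by positivity
        have t2 : 0 ≤ 4*c₁/α := by positivity
        simp only [hCdef]; linarith
      have h2I : 2 * (∫ x in Set.Ioc 0 a₀, (1 - Real.cos (ξ * x)) * φ x)
          ≤ (c₁/(2-α) + 4*c₁/α) * ξ ^ α + 4*c₁*K/α := by
        rw [← hexp]; linarith
      rw [hsplit]
      calc (2 * ∫ x in Set.Ioc 0 a₀, (1 - Real.cos (ξ * x)) * φ x)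
            + ∫ x in {x : ℝ | a₀ ≤ |x|}, (1 - Real.cos (ξ * x)) * φ x
          ≤ ((c₁/(2-α) + 4*c₁/α) * ξ ^ α + 4*c₁*K/α) + 2*c₂ := add_le_add h2I htail.2
        _ = (c₁/(2-α) + 4*c₁/α) * ξ ^ α + (4*c₁*K/α + 2*c₂) := by ring
        _ ≤ C * ξ ^ α + C := add_le_add hcoef hconst
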